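/- arXiv:1707.01157 — 2 statements merged into one kernel-verified Lean document; each statement's English description precedes it below -/
import Mathlib

section
/- For every k ≥ 1 and every net N in HSA(IR) having at most k transitions with at least one reset pre-arc, there exist a net N' in HSA(IR) having at most k − 1 transitions with at least one reset pre-arc, and a map f from markings of N to markings of N', such that: (i) for all markings M₁, M₂ of N, if M₂ is reachable from M₁ in N then f(M₂) is reachable from f(M₁) in N'; and (ii) for all markings M₁, M₂ of N, if f(M₂) is reachable from f(M₁) in N' then M₂ is reachable from M₁ in N. -/
/-- An arc from a place to a transition: an ordinary weighted arc, an
inhibitor arc, a reset arc, or a transfer arc to the place `p'`. -/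
inductive Arc (P : Type) where
  | weight : ℕ → Arc P
  | inhibitor : Arc P
  | reset : Arc P
  | transfer : P → Arc P
  deriving DecidableEq

namespace Arc

/-- Whether the arc is an ordinary weighted arc, i.e. `F(p,t) ∈ ℕ`. -/
def isNat {P : Type} : Arc P → Bool
  | weight _ => true
  | _ => false

end Arc

/-- A Petri net with special arcs: places `Fin np`, transitions `Fin nt`,
pre-arcs (possibly special), post-arcs (ordinary) and an initial marking. -/
structure SNet where
  np : ℕ
  nt : ℕ
  pre : Fin np → Fin nt → Arc (Fin np)
  post : Fin nt → Fin np → ℕ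
  init : Fin np → ℕ

namespace SNet

/-- A marking assigns a number of tokens to each place. -/
abbrev Marking (N : SNet) := Fin N.np → ℕ

/-- A transition `t` is firable at `M` if `M p ≥ F(p,t)` for ordinary
pre-arcs and `M p = 0` for inhibitor pre-arcs. -/
def Firable (N : SNet) (M : N.Marking) (t : Fin N.nt) : Prop :=
  ∀ p, match N.pre p t with
    | Arc.weight n => n ≤ M p
    | Arc.inhibitor => M p = 0
    | _ => True

/-- The marking obtained by firing `t` at `M`: remove `F(p,t)` tokens for
ordinary arcs, empty reset places, move all tokens of transfer places to
their targets, then add `F(t,p)` tokens everywhere. -/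
def fire (N : SNet) (M : N.Marking) (t : Fin N.nt) : N.Marking := fun p =>
  (match N.pre p t with
    | Arc.weight n => M p - n
    | Arc.inhibitor => M p
    | Arc.reset => 0
    | Arc.transfer _ => 0)
  + (∑ q : Fin N.np, if N.pre q t = Arc.transfer p then M q else 0)
  + N.post t p

/-- `FireSeq N M ts M'` : firing the sequence `ts` from `M` is possible and
leads to `M'`. -/
def FireSeq (N : SNet) : N.Marking → List (Fin N.nt) → N.Marking → Prop
  | M, [], M' => M' = M
  | M, t :: ts, M' => Firable N M t ∧ FireSeq N (fire N M t) ts M'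

/-- `M'` is reachable from `M` by firing some finite sequence of transitions. -/
def Reach (N : SNet) (M M' : N.Marking) : Prop := ∃ ts, FireSeq N M ts M'

/-- The marking after the first `k` firings of the infinite sequence `seq`. -/
def markingAt (N : SNet) (M0 : N.Marking) (seq : ℕ → Fin N.nt) : ℕ → N.Marking
  | 0 => M0
  | k + 1 => fire N (markingAt N M0 seq k) (seq k)

/-- `N` has an infinite run from `M0`. -/
def InfRun (N : SNet) (M0 : N.Marking) : Prop :=
  ∃ seq : ℕ → Fin N.nt, ∀ k, N.Firable (N.markingAt M0 seq k) (seq k)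

/-- A marking is deadlocked if no transition is firable at it. -/
def Deadlocked (N : SNet) (M : N.Marking) : Prop := ∀ t, ¬ N.Firable M t

/-- All special arcs respect the hierarchy `le`:
`F(p,t) ∉ ℕ` and `q ⊑ p` imply `F(q,t) ∉ ℕ`. -/
def RespectsHierarchy (N : SNet) (le : Fin N.np → Fin N.np → Prop) : Prop :=
  ∀ p t, (N.pre p t).isNat = false → ∀ q, le q p → (N.pre q t).isNat = false

/-- The inhibitor arcs respect the hierarchy `le`:
`F(p,t) = I` and `q ⊑ p` imply `F(q,t) ∉ ℕ`. -/
def InhRespectsHierarchy (N : SNet) (le : Fin N.np → Fin N.np → Prop) : Prop :=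
  ∀ p t, N.pre p t = Arc.inhibitor → ∀ q, le q p → (N.pre q t).isNat = false

def NoTransfer (N : SNet) : Prop := ∀ p t p', N.pre p t ≠ Arc.transfer p'

def NoReset (N : SNet) : Prop := ∀ p t, N.pre p t ≠ Arc.reset

def NoInhibitor (N : SNet) : Prop := ∀ p t, N.pre p t ≠ Arc.inhibitor

/-- `Index(p)` : the number of places `q` with `q ⊑ p`. -/
noncomputable def placeIndex (N : SNet) (le : Fin N.np → Fin N.np → Prop)
    (p : Fin N.np) : ℕ :=
  Nat.card {q : Fin N.np // le q p}

/-- `Index(t)` : the maximum `Index(p)` over the inhibitor pre-places `p`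
of `t` (0 if there are none). -/
noncomputable def transIndex (N : SNet) (le : Fin N.np → Fin N.np → Prop)
    (t : Fin N.nt) : ℕ :=
  (Finset.univ.filter (fun p => N.pre p t = Arc.inhibitor)).sup (N.placeIndex le)

/-- `Compat_i(M₁, M₂)` : `M₁` and `M₂` agree on all places of index at most `i`. -/
def Compat (N : SNet) (le : Fin N.np → Fin N.np → Prop) (i : ℕ)
    (M₁ M₂ : N.Marking) : Prop :=
  ∀ p, N.placeIndex le p ≤ i → M₁ p = M₂ p

/-- The maximum `Index` of the transitions occurring in the run `ρ`. -/
noncomputable def runMaxIndex (N : SNet) (le : Fin N.np → Fin N.np → Prop)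
    (ρ : List (Fin N.nt)) : ℕ :=
  (ρ.map (N.transIndex le)).foldr max 0

/-- Membership in HSA(IR): only inhibitor and reset special arcs, all of
which respect some hierarchy. -/
def IsHSA_IR (N : SNet) : Prop :=
  ∃ le : Fin N.np → Fin N.np → Prop, IsLinearOrder (Fin N.np) le ∧
    N.RespectsHierarchy le ∧ N.NoTransfer

/-- Membership in HSA(T): only transfer special arcs, all of which respect
some hierarchy. -/
def IsHSA_T (N : SNet) : Prop :=
  ∃ le : Fin N.np → Fin N.np → Prop, IsLinearOrder (Fin N.np) le ∧
    N.RespectsHierarchy le ∧ N.NoReset ∧ N.NoInhibitor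

/-- Membership in HSA(IT): only inhibitor and transfer special arcs, all of
which respect some hierarchy. -/
def IsHSA_IT (N : SNet) : Prop :=
  ∃ le : Fin N.np → Fin N.np → Prop, IsLinearOrder (Fin N.np) le ∧
    N.RespectsHierarchy le ∧ N.NoReset

/-- Membership in HSA(IRcT): inhibitor, reset and transfer special arcs all
respect some hierarchy, and each transfer arc's target place is connected to
the transition by an ordinary arc. -/
def IsHSA_IRcT (N : SNet) : Prop :=
  ∃ le : Fin N.np → Fin N.np → Prop, IsLinearOrder (Fin N.np) le ∧
    N.RespectsHierarchy le ∧
    (∀ p t p', N.pre p t = Arc.transfer p' → (N.pre p' t).isNat = true)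

/-- The number of transitions having at least one reset pre-arc. -/
def resetTransCount (N : SNet) : ℕ :=
  (Finset.univ.filter (fun t : Fin N.nt => ∃ p, N.pre p t = Arc.reset)).card

/-- The number of transitions having at least one reset or transfer pre-arc. -/
def resetOrTransferTransCount (N : SNet) : ℕ :=
  (Finset.univ.filter (fun t : Fin N.nt =>
    ∃ p, N.pre p t = Arc.reset ∨ ∃ p', N.pre p t = Arc.transfer p')).card

/-- The number of transitions having at least one special (non-ordinary) pre-arc. -/
def specialTransCount (N : SNet) : ℕ :=
  (Finset.univ.filter (fun t : Fin N.nt => ∃ p, (N.pre p t).isNat = false)).card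

/-- The number of reset arcs. -/
def resetArcCount (N : SNet) : ℕ :=
  (Finset.univ.filter
    (fun pt : Fin N.np × Fin N.nt => N.pre pt.1 pt.2 = Arc.reset)).card

/-- The number of inhibitor arcs. -/
def inhibitorArcCount (N : SNet) : ℕ :=
  (Finset.univ.filter
    (fun pt : Fin N.np × Fin N.nt => N.pre pt.1 pt.2 = Arc.inhibitor)).card

/-- The number of transfer arcs. -/
def transferArcCount (N : SNet) : ℕ :=
  (Finset.univ.filter
    (fun pt : Fin N.np × Fin N.nt => ∃ p', N.pre pt.1 pt.2 = Arc.transfer p')).card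

/-- The number of places having at least one inhibitor arc out of them. -/
def inhibitorPlaceCount (N : SNet) : ℕ :=
  (Finset.univ.filter (fun p : Fin N.np => ∃ t, N.pre p t = Arc.inhibitor)).card

end SNet

/-!
Fix a transition `t₀` with a reset arc. The net `N.unfoldReset t₀` replaces the atomic firing of
`t₀` by a protocol driven by a control token on two new places `idle` and `busy`: the copy of `t₀`
consumes the ordinary pre-weights of `t₀` and moves the token to `busy`; while busy, the places
reset by `t₀` are drained one token at a time; `finish` checks with inhibitor arcs that every
place carrying a special arc of `t₀` is empty, adds the post-weights of `t₀` and returns the token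
to `idle`. The other transitions keep their arcs and also need the idle token, so only `t₀` loses
its reset arcs. The inhibitor arcs of `finish` sit on the places special for `t₀`, an initial
segment of the hierarchy; with `idle` and `busy` put on top, the new net respects the extended
hierarchy.

Between idle markings, a run of the new net consists of copied firings and complete
start–drain–finish blocks, and each block does exactly what firing `t₀` does. The inhibitor places
of `t₀` are untouched during a block, so testing them at `finish` is as good as testing them at
the start.
-/

namespace Arc

variable {P Q : Type}

def map (f : P → Q) : Arc P → Arc Q
  | weight n => weight n
  | inhibitor => inhibitor
  | reset => reset
  | transfer p => transfer (f p)

def natWeight : Arc P → ℕ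
  | weight n => n
  | _ => 0

def Admits : Arc P → ℕ → Prop
  | weight n, m => n ≤ m
  | inhibitor, m => m = 0
  | _, _ => True

def residue : Arc P → ℕ → ℕ
  | weight n, m => m - n
  | inhibitor, m => m
  | reset, _ => 0
  | transfer _, _ => 0

@[simp] lemma admits_weight (n m : ℕ) : (weight n : Arc P).Admits m ↔ n ≤ m := Iff.rfl
@[simp] lemma admits_inhibitor (m : ℕ) : (inhibitor : Arc P).Admits m ↔ m = 0 := Iff.rfl
@[simp] lemma residue_weight (n m : ℕ) : (weight n : Arc P).residue m = m - n := rfl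
@[simp] lemma residue_inhibitor (m : ℕ) : (inhibitor : Arc P).residue m = m := rfl
@[simp] lemma residue_reset (m : ℕ) : (reset : Arc P).residue m = 0 := rfl
@[simp] lemma isNat_weight (n : ℕ) : (weight n : Arc P).isNat = true := rfl
@[simp] lemma isNat_inhibitor : (inhibitor : Arc P).isNat = false := rfl
@[simp] lemma isNat_reset : (reset : Arc P).isNat = false := rfl

@[simp] lemma admits_ite (c : Prop) [Decidable c] (a b : Arc P) (m : ℕ) :
    (if c then a else b).Admits m ↔ if c then a.Admits m else b.Admits m := by
  split_ifs <;> rfl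

@[simp] lemma residue_ite (c : Prop) [Decidable c] (a b : Arc P) (m : ℕ) :
    (if c then a else b).residue m = if c then a.residue m else b.residue m := by
  split_ifs <;> rfl

@[simp] lemma admits_map (f : P → Q) (a : Arc P) (m : ℕ) :
    (a.map f).Admits m ↔ a.Admits m := by
  cases a <;> rfl

@[simp] lemma residue_map (f : P → Q) (a : Arc P) (m : ℕ) :
    (a.map f).residue m = a.residue m := by
  cases a <;> rfl

@[simp] lemma isNat_map (f : P → Q) (a : Arc P) : (a.map f).isNat = a.isNat := by
  cases a <;> rfl

@[simp] lemma map_eq_reset_iff {f : P → Q} {a : Arc P} : a.map f = reset ↔ a = reset := by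
  cases a <;> simp [map]

lemma map_eq_transfer_iff {f : P → Q} {a : Arc P} {q : Q} :
    a.map f = transfer q ↔ ∃ p, a = transfer p ∧ f p = q := by
  cases a <;> simp [map]

end Arc

namespace SNet

variable {N : SNet}

variable (N) in
def preWeight (t : Fin N.nt) : N.Marking := fun p => (N.pre p t).natWeight

variable (N) in
def clearResets (t : Fin N.nt) (X : N.Marking) : N.Marking :=
  fun p => if N.pre p t = .reset then 0 else X p

theorem firable_iff {M : N.Marking} {t : Fin N.nt} :
    N.Firable M t ↔ ∀ p, (N.pre p t).Admits (M p) :=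
  forall_congr' fun p => by cases N.pre p t <;> rfl

theorem firable_iff_preWeight_le {M : N.Marking} {t : Fin N.nt} :
    N.Firable M t ↔ N.preWeight t ≤ M ∧ ∀ p, N.pre p t = .inhibitor → M p = 0 := by
  simp only [firable_iff, Pi.le_def, ← forall_and]
  refine forall_congr' fun p => ?_
  cases h : N.pre p t <;> simp [preWeight, h, Arc.natWeight, Arc.Admits]

theorem fire_apply_of_noTransfer (hT : N.NoTransfer) (M : N.Marking) (t : Fin N.nt)
    (p : Fin N.np) : N.fire M t p = (N.pre p t).residue (M p) + N.post t p := by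
  simp only [fire, Finset.sum_eq_zero fun q _ => if_neg (hT q t p), add_zero]
  cases N.pre p t <;> rfl

theorem fire_eq_clearResets (hT : N.NoTransfer) (M : N.Marking) (t : Fin N.nt) :
    N.fire M t = N.clearResets t (M - N.preWeight t) + N.post t := by
  funext p
  rw [fire_apply_of_noTransfer hT]
  cases h : N.pre p t
  · simp [clearResets, preWeight, h, Arc.natWeight]
  · simp [clearResets, preWeight, h, Arc.natWeight]
  · simp [clearResets, h]
  · exact absurd h (hT _ _ _)

lemma clearResets_update {t : Fin N.nt} {X : N.Marking} {q : Fin N.np}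
    (hq : N.pre q t = .reset) (v : ℕ) :
    N.clearResets t (Function.update X q v) = N.clearResets t X := by
  funext p
  by_cases hp : p = q <;> simp [clearResets, hp, hq]

lemma clearResets_eq_self {t : Fin N.nt} {X : N.Marking}
    (hX : ∀ p, N.pre p t = .reset → X p = 0) : N.clearResets t X = X :=
  funext fun p => by by_cases hp : N.pre p t = .reset <;> simp [clearResets, hp, hX]

lemma Reach.refl {M : N.Marking} : N.Reach M M := ⟨[], rfl⟩

lemma FireSeq.append {M M' M'' : N.Marking} {ts ts' : List (Fin N.nt)}
    (h : N.FireSeq M ts M') (h' : N.FireSeq M' ts' M'') : N.FireSeq M (ts ++ ts') M'' := by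
  induction ts generalizing M with
  | nil => exact (show M' = M from h) ▸ h'
  | cons t ts ih => exact ⟨h.1, ih h.2⟩

lemma Reach.trans {M₁ M₂ M₃ : N.Marking} (h : N.Reach M₁ M₂) (h' : N.Reach M₂ M₃) :
    N.Reach M₁ M₃ :=
  let ⟨_, hts⟩ := h
  let ⟨_, hts'⟩ := h'
  ⟨_, hts.append hts'⟩

lemma Reach.head {M M' : N.Marking} {t : Fin N.nt} (ht : N.Firable M t)
    (h : N.Reach (N.fire M t) M') : N.Reach M M' :=
  let ⟨ts, hts⟩ := h
  ⟨t :: ts, ht, hts⟩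

namespace UnfoldReset

def old (p : Fin N.np) : Fin (N.np + 2) := Fin.castAdd 2 p

variable (N) in
def idle : Fin (N.np + 2) := Fin.natAdd N.np 0

variable (N) in
def busy : Fin (N.np + 2) := Fin.natAdd N.np 1

def copy (t : Fin N.nt) : Fin (N.nt + (N.np + 1)) := Fin.castAdd _ t

def drain (q : Fin N.np) : Fin (N.nt + (N.np + 1)) := Fin.natAdd N.nt q.castSucc

variable (N) in
def finish : Fin (N.nt + (N.np + 1)) := Fin.natAdd N.nt (Fin.last N.np)

def idleMarking (M : N.Marking) : Fin (N.np + 2) → ℕ := Fin.append M ![1, 0]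

def busyMarking (X : N.Marking) : Fin (N.np + 2) → ℕ := Fin.append X ![0, 1]

section Indexing

variable {α : Type*}

@[simp] lemma append_old (u : Fin N.np → α) (a b : α) (p : Fin N.np) :
    Fin.append u ![a, b] (old p) = u p := by simp [old]

@[simp] lemma append_idle (u : Fin N.np → α) (a b : α) : Fin.append u ![a, b] (idle N) = a := by
  simp [idle]

@[simp] lemma append_busy (u : Fin N.np → α) (a b : α) : Fin.append u ![a, b] (busy N) = b := by
  simp [busy]

@[simp] lemma append_copy (u : Fin N.nt → α) (v : Fin (N.np + 1) → α) (t : Fin N.nt) :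
    Fin.append u v (copy t) = u t := by simp [copy]

@[simp] lemma append_drain (u : Fin N.nt → α) (v : Fin (N.np + 1) → α) (q : Fin N.np) :
    Fin.append u v (drain q) = v q.castSucc := by simp [drain]

@[simp] lemma append_finish (u : Fin N.nt → α) (v : Fin (N.np + 1) → α) :
    Fin.append u v (finish N) = v (Fin.last N.np) := by simp [finish, -Fin.natAdd_last]

end Indexing

lemma forall_place {P : Fin (N.np + 2) → Prop} :
    (∀ p, P p) ↔ (∀ p, P (old p)) ∧ P (idle N) ∧ P (busy N) := by
  simp [Fin.forall_fin_add, Fin.forall_fin_two, old, idle, busy]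

lemma forall_trans {P : Fin (N.nt + (N.np + 1)) → Prop} :
    (∀ u, P u) ↔ (∀ t, P (copy t)) ∧ (∀ q, P (drain q)) ∧ P (finish N) := by
  simp [Fin.forall_fin_add, Fin.forall_fin_succ', copy, drain, finish, -Fin.natAdd_last]

lemma place_cases (p : Fin (N.np + 2)) : (∃ q, p = old q) ∨ p = idle N ∨ p = busy N := by
  revert p
  simp [forall_place]

lemma trans_cases (u : Fin (N.nt + (N.np + 1))) :
    (∃ t, u = copy t) ∨ (∃ q, u = drain q) ∨ u = finish N := by
  revert u
  simp [forall_trans]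

@[simp] lemma idleMarking_old (M : N.Marking) (p : Fin N.np) : idleMarking M (old p) = M p := by
  simp [idleMarking]

@[simp] lemma idleMarking_idle (M : N.Marking) : idleMarking M (idle N) = 1 := by
  simp [idleMarking]

@[simp] lemma idleMarking_busy (M : N.Marking) : idleMarking M (busy N) = 0 := by
  simp [idleMarking]

@[simp] lemma busyMarking_old (X : N.Marking) (p : Fin N.np) : busyMarking X (old p) = X p := by
  simp [busyMarking]

@[simp] lemma busyMarking_idle (X : N.Marking) : busyMarking X (idle N) = 0 := by
  simp [busyMarking]

@[simp] lemma busyMarking_busy (X : N.Marking) : busyMarking X (busy N) = 1 := by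
  simp [busyMarking]

lemma marking_ext_iff {M M' : Fin (N.np + 2) → ℕ} :
    M = M' ↔ (∀ p, M (old p) = M' (old p)) ∧ M (idle N) = M' (idle N) ∧
      M (busy N) = M' (busy N) :=
  funext_iff.trans forall_place

lemma idleMarking_injective : Function.Injective (idleMarking (N := N)) := fun _ _ h =>
  funext fun p => by simpa using congrFun h (old p)

lemma idleMarking_ne_busyMarking (M X : N.Marking) : idleMarking M ≠ busyMarking X := fun h => by
  simpa using congrFun h (idle N)

end UnfoldReset

open UnfoldReset

variable (N) (t₀ : Fin N.nt)

/- Rows: the old places, `idle`, `busy`. Columns: the copies of the transitions of `N` (the copy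
of `t₀` starting the protocol), one `drain` per place, `finish`. A `drain` of a place that `t₀`
does not reset asks for the idle token, so it is dead while busy. -/
def unfoldResetPre (p : Fin (N.np + 2)) (u : Fin (N.nt + (N.np + 1))) : Arc (Fin (N.np + 2)) :=
  Fin.append
    (fun p => Fin.append
      (fun t => if t = t₀ then .weight (N.preWeight t₀ p) else (N.pre p t).map old)
      (Fin.snoc (α := fun _ => Arc _)
        (fun q => if p = q then .weight 1 else .weight 0)
        (if (N.pre p t₀).isNat then .weight 0 else .inhibitor)))
    ![Fin.append (fun _ => .weight 1)
        (Fin.snoc (α := fun _ => Arc _)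
          (fun q => .weight (if N.pre q t₀ = .reset then 0 else 1)) (.weight 0)),
      Fin.append (fun _ => .weight 0) (fun _ => .weight 1)] p u

def unfoldResetPost (u : Fin (N.nt + (N.np + 1))) : Fin (N.np + 2) → ℕ :=
  Fin.append
    (fun t => if t = t₀ then busyMarking 0 else idleMarking (N.post t))
    (Fin.snoc (α := fun _ => Fin (N.np + 2) → ℕ) (fun _ => busyMarking 0)
      (idleMarking (N.post t₀))) u

abbrev unfoldReset : SNet where
  np := N.np + 2
  nt := N.nt + (N.np + 1)
  pre := N.unfoldResetPre t₀
  post := N.unfoldResetPost t₀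
  init := idleMarking N.init

variable {N t₀}

theorem noTransfer_unfoldReset (hT : N.NoTransfer) : (N.unfoldReset t₀).NoTransfer := by
  intro p u p'
  revert p u
  simp only [forall_place, forall_trans]
  simp [unfoldResetPre, ite_eq_iff, Arc.map_eq_transfer_iff]
  exact fun p t _ q h => absurd h (hT p t q)

namespace UnfoldReset

theorem firable_copy_idle {M : N.Marking} {t : Fin N.nt} (ht : t ≠ t₀) :
    (N.unfoldReset t₀).Firable (idleMarking M) (copy t) ↔ N.Firable M t := by
  simp [firable_iff, forall_place, unfoldResetPre, ht]

theorem firable_start_idle {M : N.Marking} :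
    (N.unfoldReset t₀).Firable (idleMarking M) (copy t₀) ↔ N.preWeight t₀ ≤ M := by
  simp [firable_iff, forall_place, unfoldResetPre, Pi.le_def]

theorem not_firable_drain_idle (M : N.Marking) (q : Fin N.np) :
    ¬ (N.unfoldReset t₀).Firable (idleMarking M) (drain q) := by
  simp [firable_iff, forall_place, unfoldResetPre]

theorem not_firable_finish_idle (M : N.Marking) :
    ¬ (N.unfoldReset t₀).Firable (idleMarking M) (finish N) := by
  simp [firable_iff, forall_place, unfoldResetPre]

theorem not_firable_copy_busy (X : N.Marking) (t : Fin N.nt) :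
    ¬ (N.unfoldReset t₀).Firable (busyMarking X) (copy t) := by
  simp [firable_iff, forall_place, unfoldResetPre]

theorem firable_drain_busy {X : N.Marking} {q : Fin N.np} :
    (N.unfoldReset t₀).Firable (busyMarking X) (drain q) ↔
      1 ≤ X q ∧ N.pre q t₀ = .reset := by
  simp [firable_iff, forall_place, unfoldResetPre]

theorem firable_finish_busy {X : N.Marking} :
    (N.unfoldReset t₀).Firable (busyMarking X) (finish N) ↔
      ∀ p, (N.pre p t₀).isNat = false → X p = 0 := by
  simp [firable_iff, forall_place, unfoldResetPre]

theorem fire_copy_idle (hT : N.NoTransfer) (M : N.Marking) {t : Fin N.nt} (ht : t ≠ t₀) :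
    (N.unfoldReset t₀).fire (idleMarking M) (copy t) = idleMarking (N.fire M t) := by
  simp [marking_ext_iff, fire_apply_of_noTransfer hT,
    fire_apply_of_noTransfer (noTransfer_unfoldReset hT), unfoldResetPre, unfoldResetPost, ht]

theorem fire_start_idle (hT : N.NoTransfer) (M : N.Marking) :
    (N.unfoldReset t₀).fire (idleMarking M) (copy t₀) = busyMarking (M - N.preWeight t₀) := by
  simp [marking_ext_iff, fire_apply_of_noTransfer (noTransfer_unfoldReset hT), unfoldResetPre,
    unfoldResetPost]

theorem fire_drain_busy (hT : N.NoTransfer) (X : N.Marking) {q : Fin N.np}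
    (hq : N.pre q t₀ = .reset) :
    (N.unfoldReset t₀).fire (busyMarking X) (drain q) =
      busyMarking (Function.update X q (X q - 1)) := by
  simp +contextual [marking_ext_iff, fire_apply_of_noTransfer (noTransfer_unfoldReset hT),
    unfoldResetPre, unfoldResetPost, hq, Function.update_apply]

theorem fire_finish_busy (hT : N.NoTransfer) (X : N.Marking) :
    (N.unfoldReset t₀).fire (busyMarking X) (finish N) = idleMarking (X + N.post t₀) := by
  simp [marking_ext_iff, fire_apply_of_noTransfer (noTransfer_unfoldReset hT), unfoldResetPre,
    unfoldResetPost]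

theorem reach_busyMarking_clearResets (hT : N.NoTransfer) (X : N.Marking) :
    (N.unfoldReset t₀).Reach (busyMarking X) (busyMarking (N.clearResets t₀ X)) := by
  induction X using WellFoundedLT.induction with
  | _ X ih =>
  by_cases h : ∃ q, N.pre q t₀ = .reset ∧ X q ≠ 0
  · obtain ⟨q, hq, hXq⟩ := h
    rw [← clearResets_update hq (X q - 1)]
    refine Reach.head (firable_drain_busy.2 ⟨Nat.one_le_iff_ne_zero.2 hXq, hq⟩) ?_
    rw [fire_drain_busy hT X hq]
    exact ih _ (update_lt_self_iff.2 (by omega))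
  · push Not at h
    rw [clearResets_eq_self h]
    exact Reach.refl

theorem reach_idleMarking_fire (hT : N.NoTransfer) {M : N.Marking} {t : Fin N.nt}
    (hM : N.Firable M t) :
    (N.unfoldReset t₀).Reach (idleMarking M) (idleMarking (N.fire M t)) := by
  by_cases ht : t = t₀
  · subst t
    obtain ⟨hw, hinh⟩ := firable_iff_preWeight_le.1 hM
    have hcleared : ∀ p, (N.pre p t₀).isNat = false →
        N.clearResets t₀ (M - N.preWeight t₀) p = 0 := by
      intro p hp
      cases h : N.pre p t₀ <;> simp_all [clearResets, preWeight, Arc.natWeight]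
      exact absurd h (hT _ _ _)
    refine Reach.head (firable_start_idle.2 hw) ?_
    rw [fire_start_idle hT]
    refine (reach_busyMarking_clearResets hT _).trans
      (Reach.head (firable_finish_busy.2 hcleared) ?_)
    rw [fire_finish_busy hT, fire_eq_clearResets hT]
    exact Reach.refl
  · refine Reach.head ((firable_copy_idle ht).2 hM) ?_
    rw [fire_copy_idle hT M ht]
    exact Reach.refl

/- A busy marking `busyMarking X` is a firing of `t₀` in progress. The inhibitor tests of `t₀`
are only made by `finish`, so they are part of the conclusion, not a hypothesis. -/
theorem reach_of_fireSeq_idleMarking (hT : N.NoTransfer) {M₂ : N.Marking}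
    (ts : List (Fin (N.nt + (N.np + 1)))) :
    ∀ M', (N.unfoldReset t₀).FireSeq M' ts (idleMarking M₂) →
      (∀ M, M' = idleMarking M → N.Reach M M₂) ∧
      (∀ X, M' = busyMarking X → (∀ p, N.pre p t₀ = .inhibitor → X p = 0) ∧
        N.Reach (N.clearResets t₀ X + N.post t₀) M₂) := by
  induction ts with
  | nil =>
    rintro M' rfl
    exact ⟨fun M h => idleMarking_injective h ▸ Reach.refl,
      fun X h => absurd h (idleMarking_ne_busyMarking M₂ X)⟩
  | cons u ts ih =>
    rintro M' ⟨hu, hts⟩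
    refine ⟨?_, ?_⟩
    · rintro M rfl
      rcases trans_cases u with ⟨t, rfl⟩ | ⟨q, rfl⟩ | rfl
      · by_cases ht : t = t₀
        · subst t
          rw [fire_start_idle hT] at hts
          obtain ⟨hinh, hreach⟩ := (ih _ hts).2 _ rfl
          have hM : N.Firable M t₀ := firable_iff_preWeight_le.2 ⟨firable_start_idle.1 hu,
            fun p hp => by simpa [hp, preWeight, Arc.natWeight] using hinh p hp⟩
          exact Reach.head hM (fire_eq_clearResets hT M t₀ ▸ hreach)
        · rw [fire_copy_idle hT M ht] at hts
          exact Reach.head ((firable_copy_idle ht).1 hu) ((ih _ hts).1 _ rfl)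
      · exact absurd hu (not_firable_drain_idle M q)
      · exact absurd hu (not_firable_finish_idle M)
    · rintro X rfl
      rcases trans_cases u with ⟨t, rfl⟩ | ⟨q, rfl⟩ | rfl
      · exact absurd hu (not_firable_copy_busy X t)
      · obtain ⟨-, hq⟩ := firable_drain_busy.1 hu
        rw [fire_drain_busy hT X hq] at hts
        obtain ⟨hinh, hreach⟩ := (ih _ hts).2 _ rfl
        refine ⟨fun p hp => ?_, clearResets_update hq _ ▸ hreach⟩
        have hpq : p ≠ q := by rintro rfl; simp [hp] at hq
        simpa [hpq] using hinh p hp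
      · have hspecial := firable_finish_busy.1 hu
        rw [fire_finish_busy hT X] at hts
        rw [clearResets_eq_self fun p hp => hspecial p (by simp [hp])]
        exact ⟨fun p hp => hspecial p (by simp [hp]), (ih _ hts).1 _ rfl⟩

end UnfoldReset

theorem reach_unfoldReset_of_reach (hT : N.NoTransfer) {M₁ M₂ : N.Marking}
    (h : N.Reach M₁ M₂) :
    (N.unfoldReset t₀).Reach (idleMarking M₁) (idleMarking M₂) := by
  obtain ⟨ts, hts⟩ := h
  induction ts generalizing M₁ with
  | nil => rw [show M₂ = M₁ from hts]; exact Reach.refl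
  | cons t ts ih => exact (reach_idleMarking_fire hT hts.1).trans (ih hts.2)

theorem reach_of_reach_unfoldReset (hT : N.NoTransfer) {M₁ M₂ : N.Marking}
    (h : (N.unfoldReset t₀).Reach (idleMarking M₁) (idleMarking M₂)) : N.Reach M₁ M₂ :=
  let ⟨ts, hts⟩ := h
  (reach_of_fireSeq_idleMarking hT ts _ hts).1 M₁ rfl

variable (N) in
def unfoldResetLe (le : Fin N.np → Fin N.np → Prop) :
    Fin (N.np + 2) → Fin (N.np + 2) → Prop :=
  finSumFinEquiv.symm ⁻¹'o Sum.Lex le (· ≤ ·)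

section Hierarchy

variable {le : Fin N.np → Fin N.np → Prop}

lemma isLinearOrder_unfoldResetLe (h : IsLinearOrder _ le) :
    IsLinearOrder _ (N.unfoldResetLe le) :=
  haveI : IsLinearOrder _ (Sum.Lex le (· ≤ · : Fin 2 → Fin 2 → Prop)) := {}
  (RelEmbedding.preimage finSumFinEquiv.symm.toEmbedding _).isLinearOrder

@[simp] lemma unfoldResetLe_old_old (p q : Fin N.np) :
    N.unfoldResetLe le (old q) (old p) ↔ le q p := by
  simp [unfoldResetLe, Order.Preimage, old]

@[simp] lemma not_unfoldResetLe_idle_old (p : Fin N.np) :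
    ¬ N.unfoldResetLe le (idle N) (old p) := by
  simp [unfoldResetLe, Order.Preimage, old, idle]

@[simp] lemma not_unfoldResetLe_busy_old (p : Fin N.np) :
    ¬ N.unfoldResetLe le (busy N) (old p) := by
  simp [unfoldResetLe, Order.Preimage, old, busy]

lemma respectsHierarchy_unfoldReset (hR : N.RespectsHierarchy le) :
    (N.unfoldReset t₀).RespectsHierarchy (N.unfoldResetLe le) := by
  intro a u ha b hb
  rcases place_cases a with ⟨p, rfl⟩ | rfl | rfl <;>
    rcases place_cases b with ⟨q, rfl⟩ | rfl | rfl <;>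
    rcases trans_cases u with ⟨t, rfl⟩ | ⟨r, rfl⟩ | rfl <;>
    simp_all [unfoldResetPre, apply_ite Arc.isNat]
  exacts [hR _ _ ha.2 _ hb, hR _ _ ha _ hb]

end Hierarchy

theorem isHSA_IR_unfoldReset (hN : N.IsHSA_IR) : (N.unfoldReset t₀).IsHSA_IR :=
  let ⟨le, hlin, hR, hT⟩ := hN
  ⟨N.unfoldResetLe le, isLinearOrder_unfoldResetLe hlin, respectsHierarchy_unfoldReset hR,
    noTransfer_unfoldReset hT⟩

lemma exists_eq_copy_of_pre_unfoldReset_eq_reset {u : Fin (N.nt + (N.np + 1))}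
    {a : Fin (N.np + 2)} (ha : (N.unfoldReset t₀).pre a u = .reset) :
    ∃ t ≠ t₀, copy t = u ∧ ∃ p, N.pre p t = .reset := by
  rcases place_cases a with ⟨p, rfl⟩ | rfl | rfl <;>
    rcases trans_cases u with ⟨t, rfl⟩ | ⟨r, rfl⟩ | rfl <;>
    simp_all [unfoldResetPre, ite_eq_iff]
  exact ⟨t, ha.1, rfl, p, ha.2⟩

theorem resetTransCount_unfoldReset_lt (h₀ : ∃ p, N.pre p t₀ = .reset) :
    (N.unfoldReset t₀).resetTransCount < N.resetTransCount := by
  set R := Finset.univ.filter fun t : Fin N.nt => ∃ p, N.pre p t = .reset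
  calc (N.unfoldReset t₀).resetTransCount ≤ ((R.erase t₀).image copy).card := by
        refine Finset.card_le_card fun u hu => ?_
        obtain ⟨a, ha⟩ := (Finset.mem_filter.1 hu).2
        obtain ⟨t, ht, rfl, hreset⟩ := exists_eq_copy_of_pre_unfoldReset_eq_reset ha
        exact Finset.mem_image_of_mem _ (by simp [R, ht, hreset])
    _ ≤ (R.erase t₀).card := Finset.card_image_le
    _ < R.card := Finset.card_erase_lt_of_mem (by simpa [R] using h₀)

end SNet

theorem hsa_ir_reset_elimination_general (k : ℕ) (N : SNet)
    (hN : N.IsHSA_IR) (hcount : N.resetTransCount ≤ k) :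
    ∃ N' : SNet, N'.IsHSA_IR ∧ N'.resetTransCount ≤ k - 1 ∧
      ∃ f : N.Marking → N'.Marking,
        (∀ M₁ M₂ : N.Marking, N.Reach M₁ M₂ → N'.Reach (f M₁) (f M₂)) ∧
        (∀ M₁ M₂ : N.Marking, N'.Reach (f M₁) (f M₂) → N.Reach M₁ M₂) := by
  by_cases hle : N.resetTransCount ≤ k - 1
  · exact ⟨N, hN, hle, id, fun _ _ => id, fun _ _ => id⟩
  obtain ⟨t₀, ht₀⟩ := Finset.card_pos.1 (show 0 < N.resetTransCount by omega)
  have hlt := SNet.resetTransCount_unfoldReset_lt (Finset.mem_filter.1 ht₀).2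
  refine ⟨N.unfoldReset t₀, SNet.isHSA_IR_unfoldReset hN, by omega,
    SNet.UnfoldReset.idleMarking, ?_⟩
  obtain ⟨-, -, -, hT⟩ := hN
  exact ⟨fun _ _ => SNet.reach_unfoldReset_of_reach hT,
    fun _ _ => SNet.reach_of_reach_unfoldReset hT⟩

/-- every HSA(IR) net with at most `k ≥ 1` transitions having a
reset pre-arc reduces (preserving reachability in both directions) to an
HSA(IR) net with at most `k - 1` such transitions. -/
theorem hsa_ir_reset_elimination (k : ℕ) (hk : 1 ≤ k) (N : SNet)
    (hN : N.IsHSA_IR) (hcount : N.resetTransCount ≤ k) :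
    ∃ N' : SNet, N'.IsHSA_IR ∧ N'.resetTransCount ≤ k - 1 ∧
      ∃ f : N.Marking → N'.Marking,
        (∀ M₁ M₂ : N.Marking, N.Reach M₁ M₂ → N'.Reach (f M₁) (f M₂)) ∧
        (∀ M₁ M₂ : N.Marking, N'.Reach (f M₁) (f M₂) → N.Reach M₁ M₂) :=
  hsa_ir_reset_elimination_general k N hN hcount
end

section
/- A net N in Z_R HSA(I) has an infinite run from its initial marking M₀ if and only if there exist markings M₁ and M₂, a run ρ₀ from M₀ to M₁, and a nonempty run ρ from M₁ to M₂, such that M₁ ≤ M₂ componentwise and Compat_i(M₁, M₂) holds, where i is the maximum Index of the transitions occurring in ρ. -/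
/-!
Along an infinite run, let `t` be a transition fired infinitely often whose index `i` is maximal
among such transitions; eventually only transitions of index at most `i` fire. By the hierarchy,
every place of index at most `i` carries an inhibitor or reset arc to `t`, so firing `t` sets all
of them to `F(t, ·)`. By Dickson's lemma two of the (late enough) markings reached right after
firing `t` are comparable, and the run between them is the required `ρ`.

Conversely, without transfer arcs each place evolves independently, and inhibitor arcs only test
places of index at most `i`; hence a run of maximal index `i` can be replayed from any larger
marking agreeing on those places, ending again in a larger agreeing marking, and `ρ` can be
repeated forever.
-/

open Filter

lemma exists_frequently_eq_and_eventually_le {T : Type*} [Finite T] (s : ℕ → T) (f : T → ℕ) :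
    ∃ t, (∃ᶠ k in atTop, s k = t) ∧ ∀ᶠ k in atTop, f (s k) ≤ f t := by
  have hR : {t | ∃ᶠ k in atTop, s k = t}.Nonempty := by
    by_contra! h
    have hnot : ∀ t, ∀ᶠ k in atTop, s k ≠ t := fun t =>
      not_frequently.mp fun ht => h.subset ht
    obtain ⟨k, hk⟩ := (eventually_all.mpr hnot).exists
    exact hk (s k) rfl
  obtain ⟨t, ht, hmax⟩ := Set.exists_max_image _ f (Set.toFinite _) hR
  refine ⟨t, ht, ?_⟩
  have hvisit : ∀ u, ∀ᶠ k in atTop, s k = u → f u ≤ f t := fun u => by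
    by_cases hu : ∃ᶠ k in atTop, s k = u
    · exact Eventually.of_forall fun _ _ => hmax u hu
    · exact (not_frequently.mp hu).mono fun _ hk h => absurd h hk
  exact (eventually_all.mpr hvisit).mono fun k hk => hk (s k) rfl

lemma Filter.Frequently.exists_lt_and_le {α : Type*} [LE α] [WellQuasiOrderedLE α]
    {p : ℕ → Prop} (hp : ∃ᶠ k in atTop, p k) (f : ℕ → α) :
    ∃ a b, a < b ∧ p a ∧ p b ∧ f a ≤ f b := by
  have hinf := Nat.frequently_atTop_iff_infinite.mp hp
  obtain ⟨m, n, hmn, hle⟩ := wellQuasiOrdered_le (f ∘ Nat.nth p)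
  exact ⟨_, _, Nat.nth_strictMono hinf hmn, Nat.nth_mem_of_infinite hinf m,
    Nat.nth_mem_of_infinite hinf n, hle⟩

namespace SNet

variable {N : SNet} {le : Fin N.np → Fin N.np → Prop}

lemma one_le_placeIndex [Std.Refl le] (p : Fin N.np) : 1 ≤ N.placeIndex le p :=
  have : Nonempty {q // le q p} := ⟨⟨p, refl_of le p⟩⟩
  Nat.card_pos

lemma le_of_placeIndex_le [IsTrans (Fin N.np) le] [Std.Total le] {p q : Fin N.np}
    (h : N.placeIndex le q ≤ N.placeIndex le p) : le q p := by
  by_contra hqp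
  have hpq : le p q := (total_of le p q).resolve_right hqp
  have hss : {r | le r p} ⊂ {r | le r q} :=
    ⟨fun r hr => trans_of le hr hpq, fun hsub => hqp (hsub (refl_of le q))⟩
  have hlt := Set.ncard_lt_ncard hss (Set.toFinite _)
  rw [← Nat.card_coe_set_eq, ← Nat.card_coe_set_eq] at hlt
  exact absurd h (not_le.mpr hlt)

lemma placeIndex_le_transIndex {p : Fin N.np} {t : Fin N.nt} (h : N.pre p t = Arc.inhibitor) :
    N.placeIndex le p ≤ N.transIndex le t :=
  Finset.le_sup (Finset.mem_filter.mpr ⟨Finset.mem_univ p, h⟩)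

lemma exists_inhibitor_of_placeIndex_le_transIndex [IsTrans (Fin N.np) le] [Std.Total le]
    {q : Fin N.np} {t : Fin N.nt} (hq : N.placeIndex le q ≤ N.transIndex le t) :
    ∃ p, N.pre p t = Arc.inhibitor ∧ le q p := by
  have hne : (Finset.univ.filter fun p => N.pre p t = Arc.inhibitor).Nonempty := by
    rw [Finset.nonempty_iff_ne_empty]
    intro h
    simp only [transIndex, h, Finset.sup_empty, le_bot_iff] at hq
    exact Nat.one_le_iff_ne_zero.mp (one_le_placeIndex q) hq
  obtain ⟨p, hp, hsup⟩ := Finset.exists_mem_eq_sup _ hne (N.placeIndex le)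
  exact ⟨p, (Finset.mem_filter.mp hp).2, le_of_placeIndex_le (hq.trans_eq hsup)⟩

lemma runMaxIndex_cons (t : Fin N.nt) (ρ : List (Fin N.nt)) :
    N.runMaxIndex le (t :: ρ) = max (N.transIndex le t) (N.runMaxIndex le ρ) := rfl

lemma runMaxIndex_le_iff {ρ : List (Fin N.nt)} {i : ℕ} :
    N.runMaxIndex le ρ ≤ i ↔ ∀ t ∈ ρ, N.transIndex le t ≤ i := by
  induction ρ with
  | nil => simp [runMaxIndex]
  | cons t ρ ih => simp [runMaxIndex_cons, ih]

lemma Compat.trans {i : ℕ} {M₁ M₂ M₃ : N.Marking} (h₁₂ : N.Compat le i M₁ M₂)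
    (h₂₃ : N.Compat le i M₂ M₃) : N.Compat le i M₁ M₃ :=
  fun p hp => (h₁₂ p hp).trans (h₂₃ p hp)

lemma transferSum_eq_zero (hnt : N.NoTransfer) (M : N.Marking) (t : Fin N.nt) (p : Fin N.np) :
    (∑ q : Fin N.np, if N.pre q t = Arc.transfer p then M q else 0) = 0 :=
  Finset.sum_eq_zero fun q _ => if_neg (hnt q t p)

lemma fire_apply_congr (hnt : N.NoTransfer) {M M' : N.Marking} (t : Fin N.nt) {p : Fin N.np}
    (hp : M p = M' p) : N.fire M t p = N.fire M' t p := by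
  simp only [fire, transferSum_eq_zero hnt, hp]

lemma fire_eq_post_of_isNat_eq_false (hnt : N.NoTransfer) {M : N.Marking} {t : Fin N.nt}
    (hf : N.Firable M t) {q : Fin N.np} (hq : (N.pre q t).isNat = false) :
    N.fire M t q = N.post t q := by
  have hMq := hf q
  simp only [fire, transferSum_eq_zero hnt, add_zero]
  rcases hpre : N.pre q t with n | _ | _ | r
  · simp [hpre, Arc.isNat] at hq
  · simp only [hpre] at hMq ⊢
    rw [hMq, zero_add]
  · simp
  · exact absurd hpre (hnt q t r)

lemma fire_eq_post_of_placeIndex_le [IsTrans (Fin N.np) le] [Std.Total le]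
    (hresp : N.InhRespectsHierarchy le) (hnt : N.NoTransfer) {M : N.Marking} {t : Fin N.nt}
    (hf : N.Firable M t) {q : Fin N.np} (hq : N.placeIndex le q ≤ N.transIndex le t) :
    N.fire M t q = N.post t q :=
  have ⟨p, hp, hqp⟩ := exists_inhibitor_of_placeIndex_le_transIndex hq
  fire_eq_post_of_isNat_eq_false hnt hf (hresp p t hp q hqp)

lemma Firable.mono {M M' : N.Marking} {t : Fin N.nt} (hf : N.Firable M t) (hle : M ≤ M')
    (hinh : ∀ p, N.pre p t = Arc.inhibitor → M p = M' p) : N.Firable M' t := by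
  intro p
  have hMp := hf p
  rcases hpre : N.pre p t with n | _ | _ | _ <;> simp only [hpre] at hMp ⊢
  · exact hMp.trans (hle p)
  · rwa [← hinh p hpre]

lemma fire_mono {M M' : N.Marking} (t : Fin N.nt) (hle : M ≤ M') :
    N.fire M t ≤ N.fire M' t := by
  intro p
  refine Nat.add_le_add (Nat.add_le_add ?_ ?_) le_rfl
  · rcases N.pre p t with n | _ | _ | _
    · exact Nat.sub_le_sub_right (hle p) n
    · exact hle p
    · exact le_rfl
    · exact le_rfl
  · exact Finset.sum_le_sum fun q _ => by split_ifs <;> simp [hle q]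

lemma FireSeq.mono (hnt : N.NoTransfer) {i : ℕ} :
    ∀ {ρ : List (Fin N.nt)} {M M₁ M' : N.Marking}, N.FireSeq M ρ M₁ → M ≤ M' →
      N.Compat le i M M' → N.runMaxIndex le ρ ≤ i →
      ∃ M₁', N.FireSeq M' ρ M₁' ∧ M₁ ≤ M₁' ∧ N.Compat le i M₁ M₁'
  | [], _, _, M', hρ, hle, hc, _ => ⟨M', rfl, hρ ▸ hle, hρ ▸ hc⟩
  | t :: _, _, _, _, ⟨hf, hρ⟩, hle, hc, hi => by
    rw [runMaxIndex_cons, max_le_iff] at hi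
    have hf' := hf.mono hle fun p hp => hc p ((placeIndex_le_transIndex hp).trans hi.1)
    obtain ⟨M₁', hρ', hle', hc'⟩ := hρ.mono hnt (fire_mono t hle)
      (fun p hp => fire_apply_congr hnt t (hc p hp)) hi.2
    exact ⟨M₁', ⟨hf', hρ'⟩, hle', hc'⟩

def FirableUpTo (N : SNet) (M : N.Marking) (s : Stream' (Fin N.nt)) (n : ℕ) : Prop :=
  ∀ k < n, N.Firable (N.markingAt M s k) (s.get k)

lemma FirableUpTo.mono {M : N.Marking} {s : Stream' (Fin N.nt)} {m n : ℕ}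
    (h : N.FirableUpTo M s n) (hmn : m ≤ n) : N.FirableUpTo M s m :=
  fun k hk => h k (hk.trans_le hmn)

lemma infRun_iff_forall_firableUpTo {M : N.Marking} :
    N.InfRun M ↔ ∃ s : Stream' (Fin N.nt), ∀ n, N.FirableUpTo M s n :=
  ⟨fun ⟨s, hs⟩ => ⟨s, fun _ k _ => hs k⟩,
    fun ⟨s, hs⟩ => ⟨s, fun k => hs (k + 1) k k.lt_succ_self⟩⟩

lemma markingAt_add (M : N.Marking) (s : Stream' (Fin N.nt)) (n k : ℕ) :
    N.markingAt M s (n + k) = N.markingAt (N.markingAt M s n) (s.drop n) k := by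
  induction k with
  | zero => rfl
  | succ k ih => exact congrArg₂ N.fire ih (congrArg s.get (add_comm n k))

lemma markingAt_cons_succ (M : N.Marking) (a : Fin N.nt) (s : Stream' (Fin N.nt)) (k : ℕ) :
    N.markingAt M (Stream'.cons a s) (k + 1) = N.markingAt (N.fire M a) s k := by
  rw [add_comm, markingAt_add]; rfl

lemma firableUpTo_cons_succ {M : N.Marking} {a : Fin N.nt} {s : Stream' (Fin N.nt)} {n : ℕ} :
    N.FirableUpTo M (Stream'.cons a s) (n + 1) ↔
      N.Firable M a ∧ N.FirableUpTo (N.fire M a) s n := by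
  refine Nat.forall_lt_succ_left.trans (and_congr Iff.rfl (forall₂_congr fun k _ => ?_))
  rw [markingAt_cons_succ]
  rfl

lemma FireSeq.firableUpTo_append {M M' : N.Marking} {s : Stream' (Fin N.nt)} {n : ℕ} :
    ∀ {ρ : List (Fin N.nt)}, N.FireSeq M ρ M' → N.FirableUpTo M' s n →
      N.FirableUpTo M (ρ ++ₛ s) (ρ.length + n)
  | [], hρ, hs => by rw [hρ] at hs; simpa using hs
  | _ :: _, ⟨hf, hρ⟩, hs => by
    rw [Stream'.cons_append_stream, List.length_cons, add_right_comm, firableUpTo_cons_succ]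
    exact ⟨hf, hρ.firableUpTo_append hs⟩

lemma FirableUpTo.fireSeq_take {M : N.Marking} {s : Stream' (Fin N.nt)} {n : ℕ}
    (h : N.FirableUpTo M s n) : N.FireSeq M (s.take n) (N.markingAt M s n) := by
  induction n generalizing M s with
  | zero => rfl
  | succ n ih =>
    rw [← Stream'.eta s, firableUpTo_cons_succ] at h
    rw [← Stream'.eta s, Stream'.take_succ_cons, markingAt_cons_succ]
    exact ⟨h.1, ih h.2⟩

lemma InfRun.of_fireSeq {M₀ M : N.Marking} {ρ : List (Fin N.nt)} (hρ : N.FireSeq M₀ ρ M)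
    (h : N.InfRun M) : N.InfRun M₀ := by
  obtain ⟨s, hs⟩ := infRun_iff_forall_firableUpTo.mp h
  exact infRun_iff_forall_firableUpTo.mpr
    ⟨ρ ++ₛ s, fun n => (hρ.firableUpTo_append (hs n)).mono (Nat.le_add_left n _)⟩

lemma runMaxIndex_take_le {s : Stream' (Fin N.nt)} {n i : ℕ}
    (h : ∀ j < n, N.transIndex le (s.get j) ≤ i) : N.runMaxIndex le (s.take n) ≤ i :=
  runMaxIndex_le_iff.mpr fun u hu => by
    obtain ⟨j, hj, rfl⟩ := List.mem_iff_getElem.mp hu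
    rw [Stream'.take_get]
    exact h j (by simpa using hj)

theorem infRun_of_subsumption (hnt : N.NoTransfer) {M₁ M₂ : N.Marking} {ρ : List (Fin N.nt)}
    (hne : ρ ≠ []) (hρ : N.FireSeq M₁ ρ M₂) (hle : M₁ ≤ M₂)
    (hc : N.Compat le (N.runMaxIndex le ρ) M₁ M₂) : N.InfRun M₁ := by
  have hcycle : ∀ q M, M₁ ≤ M → N.Compat le (N.runMaxIndex le ρ) M₁ M →
      N.FirableUpTo M (Stream'.cycle ρ hne) (q * ρ.length) := by
    intro q
    induction q with
    | zero => simp [FirableUpTo]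
    | succ q ih =>
      intro M hM hcM
      obtain ⟨M', hρ', hle', hc'⟩ := hρ.mono hnt hM hcM le_rfl
      rw [Stream'.cycle_eq, add_one_mul, add_comm]
      exact hρ'.firableUpTo_append (ih M' (hle.trans hle') (hc.trans hc'))
  refine infRun_iff_forall_firableUpTo.mpr ⟨Stream'.cycle ρ hne, fun n => ?_⟩
  exact (hcycle n M₁ le_rfl fun _ _ => rfl).mono
    (Nat.le_mul_of_pos_right n (List.length_pos_iff.mpr hne))

theorem InfRun.exists_subsumption [IsTrans (Fin N.np) le] [Std.Total le]
    (hresp : N.InhRespectsHierarchy le) (hnt : N.NoTransfer) {M₀ : N.Marking}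
    (h : N.InfRun M₀) :
    ∃ (M₁ M₂ : N.Marking) (ρ₀ ρ : List (Fin N.nt)),
      N.FireSeq M₀ ρ₀ M₁ ∧ ρ ≠ [] ∧ N.FireSeq M₁ ρ M₂ ∧ M₁ ≤ M₂ ∧
        N.Compat le (N.runMaxIndex le ρ) M₁ M₂ := by
  obtain ⟨s, hs⟩ : ∃ s : Stream' (Fin N.nt), ∀ k, N.Firable (N.markingAt M₀ s k) (s.get k) := h
  obtain ⟨t, hfreq, hev⟩ := exists_frequently_eq_and_eventually_le s.get (N.transIndex le)
  obtain ⟨K, hK⟩ := eventually_atTop.mp hev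
  obtain ⟨a, b, hab, ⟨hta, hKa⟩, ⟨htb, -⟩, hle⟩ :=
    (hfreq.and_eventually (eventually_ge_atTop K)).exists_lt_and_le
      fun k => N.markingAt M₀ s (k + 1)
  have hpost : ∀ k, s.get k = t → ∀ q, N.placeIndex le q ≤ N.transIndex le t →
      N.markingAt M₀ s (k + 1) q = N.post t q := by
    rintro k rfl q hq
    exact fire_eq_post_of_placeIndex_le hresp hnt (hs k) hq
  have hseg : N.FirableUpTo (N.markingAt M₀ s (a + 1)) (s.drop (a + 1)) (b - a) :=
    fun k _ => by
      rw [← markingAt_add, Stream'.get_drop]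
      exact hs _
  have hρ := hseg.fireSeq_take
  rw [← markingAt_add, show a + 1 + (b - a) = b + 1 by omega] at hρ
  have hi : N.runMaxIndex le ((s.drop (a + 1)).take (b - a)) ≤ N.transIndex le t :=
    runMaxIndex_take_le fun j _ => by
      rw [Stream'.get_drop]
      exact hK _ (by omega)
  refine ⟨_, _, s.take (a + 1), _, FirableUpTo.fireSeq_take fun k _ => hs k, ?_, hρ, hle, ?_⟩
  · rw [← List.length_pos_iff, Stream'.length_take]
    omega
  · intro q hq
    rw [hpost a hta q (hq.trans hi), hpost b htb q (hq.trans hi)]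

end SNet

/-- a `Z_R HSA(I)` net has an infinite run from its initial
marking iff some reachable marking `M₁` admits a nonempty run `ρ` to a
marking `M₂ ≥ M₁` with `Compat_i(M₁, M₂)`, where `i` is the maximum index
of the transitions of `ρ`. -/
theorem zr_hsa_i_infinite_run_iff_subsumption (N : SNet)
    (le : Fin N.np → Fin N.np → Prop) (hlin : IsLinearOrder (Fin N.np) le)
    (hresp : N.InhRespectsHierarchy le) (hnt : N.NoTransfer) :
    N.InfRun N.init ↔
      ∃ (M₁ M₂ : N.Marking) (ρ₀ ρ : List (Fin N.nt)),
        N.FireSeq N.init ρ₀ M₁ ∧ ρ ≠ [] ∧ N.FireSeq M₁ ρ M₂ ∧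
        (∀ p, M₁ p ≤ M₂ p) ∧ N.Compat le (N.runMaxIndex le ρ) M₁ M₂ := by
  refine ⟨fun h => h.exists_subsumption hresp hnt, ?_⟩
  rintro ⟨M₁, M₂, ρ₀, ρ, hρ₀, hne, hρ, hle, hc⟩
  exact (SNet.infRun_of_subsumption hnt hne hρ hle hc).of_fireSeq hρ₀
end
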